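/- Influence lower bound via the OSSS inequality: For Bernoulli bond percolation on ℤ^d at parameter p ∈ (0,1), for every n ≥ 1, Σ_{e ∈ E_n} Inf_e[𝟙_{0 ↔ ∂Λ_n}] ≥ (n / S_n) · θ_n(p)(1 − θ_n(p)), where E_n is the set of edges with both endpoints in Λ_n, θ_k(p) := ℙ_p[0 ↔ ∂Λ_k] (with θ_0 := 1), and S_n := Σ_{k=0}^{n−1} θ_k(p). -/

import Mathlib

open scoped Classical

section Percolation

/-!  Bernoulli bond percolation on `ℤ^d`.

Vertices are points of `ℤ^d` (functions `Fin d → ℤ`).  An edge of the lattice joins two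
vertices at Euclidean distance 1; we encode the edge `{x, x + eᵢ}` (where `eᵢ` is the
`i`-th unit vector) by the pair `(x, i)`, which gives a bijective encoding of the edge
set `𝔼^d`.  A percolation configuration assigns a Boolean (open/closed) to every edge.

Probabilities of events depending on finitely many edges are expressed as the
corresponding finite sums of Bernoulli(`p`) product weights; probabilities of
increasing/decreasing limits of such events (`0 ↔ ∞`, existence of an infinite cluster)
are expressed as the corresponding monotone limits (`⨅`/`⨆`) of finite-volume
probabilities, which is how they are obtained from continuity of probability measures. -/

/-- A vertex of `ℤ^d`. -/
abbrev PVert (d : ℕ) := Fin d → ℤ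

/-- An edge of `ℤ^d`: the pair `(x, i)` encodes the edge `{x, x + eᵢ}`. -/
abbrev PEdge (d : ℕ) := (Fin d → ℤ) × Fin d

/-- The `i`-th unit vector of `ℤ^d`. -/
def unitVec (d : ℕ) (i : Fin d) : PVert d := fun j => if j = i then 1 else 0

/-- A percolation configuration: each edge is open (`true`) or closed (`false`). -/
abbrev PConfig (d : ℕ) := PEdge d → Bool

/-- `x` and `y` are joined by an open edge of `ω`. -/
def openAdj {d : ℕ} (ω : PConfig d) (x y : PVert d) : Prop :=
  ∃ i : Fin d, (y = x + unitVec d i ∧ ω (x, i) = true) ∨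
               (x = y + unitVec d i ∧ ω (y, i) = true)

/-- `x` and `y` are connected by an open path of `ω` all of whose vertices lie in `S`. -/
def connIn {d : ℕ} (ω : PConfig d) (S : Set (PVert d)) (x y : PVert d) : Prop :=
  Relation.ReflTransGen (fun a b => a ∈ S ∧ b ∈ S ∧ openAdj ω a b) x y

/-- The probability, under the product Bernoulli(`p`) measure `ℙ_p`, of an event `A`
depending only on the (finitely many) edges in `E`: the sum, over configurations `η` of
the edges of `E`, of the Bernoulli weight of `η` times the indicator of `A`. -/
noncomputable def cylProb (d : ℕ) (p : ℝ) (E : Finset (PEdge d))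
    (A : PConfig d → Prop) : ℝ :=
  ∑ η : {e // e ∈ E} → Bool,
    (∏ e : {e // e ∈ E}, if η e then p else 1 - p) *
      (if A (fun e => if h : e ∈ E then η ⟨e, h⟩ else false) then 1 else 0)

/-- The influence `Inf_e[𝟙_A] = 𝔼_p[|𝟙_A(ω) − 𝟙_A(Flip_e ω)|]` of the edge `e` on an
event `A` depending only on the edges in `E`. -/
noncomputable def cylInfluence (d : ℕ) (p : ℝ) (E : Finset (PEdge d))
    (A : PConfig d → Prop) (e : PEdge d) : ℝ :=
  ∑ η : {e' // e' ∈ E} → Bool,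
    (∏ e' : {e' // e' ∈ E}, if η e' then p else 1 - p) *
      |(if A (fun e' => if h : e' ∈ E then η ⟨e', h⟩ else false) then (1 : ℝ) else 0) -
        (if A (Function.update (fun e' => if h : e' ∈ E then η ⟨e', h⟩ else false) e
            (!(if h : e ∈ E then η ⟨e, h⟩ else false))) then (1 : ℝ) else 0)|

/-- The sup-norm `‖x‖_∞` of a vertex, as a natural number. -/
def supNorm {d : ℕ} (x : PVert d) : ℕ :=
  Finset.univ.sup fun i => (x i).natAbs

/-- The box `Λ_n = [−n,n]^d`, as a set of vertices. -/
def box (d : ℕ) (n : ℕ) : Set (PVert d) := {x | supNorm x ≤ n}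

/-- The box `Λ_n`, as a finset. -/
noncomputable def boxF (d : ℕ) (n : ℕ) : Finset (PVert d) :=
  Fintype.piFinset fun _ => Finset.Icc (-(n : ℤ)) n

/-- The edges with both endpoints in a given finset of vertices. -/
def edgesIn (d : ℕ) (V : Finset (PVert d)) : Finset (PEdge d) :=
  (V ×ˢ (Finset.univ : Finset (Fin d))).filter fun e => e.1 + unitVec d e.2 ∈ V

/-- `E_n`: the edges with both endpoints in `Λ_n`. -/
noncomputable def boxEdges (d : ℕ) (n : ℕ) : Finset (PEdge d) := edgesIn d (boxF d n)

/-- The event `{0 ↔ ∂Λ_n}`: the origin is connected to `∂Λ_n = {x : ‖x‖_∞ = n}` by an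
open path (inside `Λ_n`; this only depends on the edges of `E_n`). -/
def zeroToBoundary (d : ℕ) (n : ℕ) (ω : PConfig d) : Prop :=
  ∃ y : PVert d, supNorm y = n ∧ connIn ω (box d n) 0 y

/-- `θ_n(p) = ℙ_p[0 ↔ ∂Λ_n]` (with `θ_0 = 1`). -/
noncomputable def theta (d : ℕ) (p : ℝ) (n : ℕ) : ℝ :=
  cylProb d p (boxEdges d n) (zeroToBoundary d n)

/-- `ℙ_p[0 ↔ ∞]`: since the events `{0 ↔ ∂Λ_n}` decrease to `{0 ↔ ∞}`, this is the
decreasing limit `⨅ n, θ_n(p)`. -/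
noncomputable def probZeroToInfty (d : ℕ) (p : ℝ) : ℝ := ⨅ n : ℕ, theta d p n

/-- The event `{Λ_k ↔ ∂Λ_N}` (within `Λ_N`). -/
def boxToBoundary (d : ℕ) (k N : ℕ) (ω : PConfig d) : Prop :=
  ∃ x y : PVert d, supNorm x ≤ k ∧ supNorm y = N ∧ connIn ω (box d N) x y

/-- `ℙ_p[∃ an infinite open connected component]`: the events `{Λ_k ↔ ∂Λ_{k+n}}`
decrease (as `n → ∞`) to `{Λ_k ↔ ∞}`, which increase (as `k → ∞`) to the event that
some vertex lies in an infinite open cluster; accordingly the probability is the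
monotone double limit `⨆ k, ⨅ n` of finite-volume probabilities. -/
noncomputable def probInfiniteCluster (d : ℕ) (p : ℝ) : ℝ :=
  ⨆ k : ℕ, ⨅ n : ℕ,
    cylProb d p (boxEdges d (k + n)) (boxToBoundary d k (k + n))

/-- The critical point `p_c = sup{p ∈ [0,1] : ℙ_p[0 ↔ ∞] = 0}` of Bernoulli bond
percolation on `ℤ^d`. -/
noncomputable def pCrit (d : ℕ) : ℝ :=
  sSup {p : ℝ | p ∈ Set.Icc (0 : ℝ) 1 ∧ probZeroToInfty d p = 0}

end Percolation

section PlanarPercolation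

/-! Rectangles and crossing events for `ℤ²`. -/

/-- The vertex set of the rectangle `R(n,m) = [0,n] × [0,m]` in `ℤ²`. -/
def rect (n m : ℕ) : Set (PVert 2) :=
  {x | 0 ≤ x 0 ∧ x 0 ≤ n ∧ 0 ≤ x 1 ∧ x 1 ≤ m}

/-- The rectangle `R(n,m)`, as a finset. -/
noncomputable def rectF (n m : ℕ) : Finset (PVert 2) :=
  Fintype.piFinset fun j => Finset.Icc 0 (if j = 0 then (n : ℤ) else (m : ℤ))

/-- The edges of the rectangle `R(n,m)`. -/
noncomputable def rectEdges (n m : ℕ) : Finset (PEdge 2) := edgesIn 2 (rectF n m)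

/-- `ℋ(n,m)`: the rectangle `R(n,m)` contains an open path from its left side
`{0} × [0,m]` to its right side `{n} × [0,m]`. -/
def crossH (n m : ℕ) (ω : PConfig 2) : Prop :=
  ∃ x y : PVert 2, x ∈ rect n m ∧ x 0 = 0 ∧ y ∈ rect n m ∧ y 0 = n ∧
    connIn ω (rect n m) x y

/-- `𝒱(n,m)`: the rectangle `R(n,m)` contains an open path from its bottom side
`[0,n] × {0}` to its top side `[0,n] × {m}`. -/
def crossV (n m : ℕ) (ω : PConfig 2) : Prop :=
  ∃ x y : PVert 2, x ∈ rect n m ∧ x 1 = 0 ∧ y ∈ rect n m ∧ y 1 = m ∧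
    connIn ω (rect n m) x y

/-- `ℙ_p[ℋ(n,m)]`. -/
noncomputable def probCrossH (p : ℝ) (n m : ℕ) : ℝ :=
  cylProb 2 p (rectEdges n m) (crossH n m)

/-- `ℙ_p[𝒱(n,m)]`. -/
noncomputable def probCrossV (p : ℝ) (n m : ℕ) : ℝ :=
  cylProb 2 p (rectEdges n m) (crossV n m)

end PlanarPercolation

/-!
For each `1 ≤ k ≤ n`, the event `0 ↔ ∂Λ_n` is computed by the decision tree that explores the
open cluster of the sphere `∂Λ_k` inside `Λ_n`, because every open path from `0` to `∂Λ_n`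
crosses `∂Λ_k`. This tree queries an edge only if one of its endpoints `x` is joined to `∂Λ_k`,
which forces `x ↔ x + ∂Λ_{|k - ‖x‖|}`; by translation invariance and monotonicity this has
probability at most `θ_{|k - ‖x‖|}`, so the revealments summed over `k` are at most `4 S_n`.
Averaging the OSSS inequality `Var f ≤ p(1-p) ∑_e δ_e(T) Inf_e(f)` over the `n` trees gives
`n θ_n (1 - θ_n) ≤ 4 p (1 - p) S_n ∑_e Inf_e ≤ S_n ∑_e Inf_e`.
-/

open Function

noncomputable section

section BernoulliCube

open Finset

variable {α β : Type*} [Fintype α] [Fintype β] {p : ℝ}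

def bitWeight (p : ℝ) (b : Bool) : ℝ := if b then p else 1 - p

def cubeWeight (p : ℝ) (η : α → Bool) : ℝ := ∏ a, bitWeight p (η a)

lemma bitWeight_nonneg (hp : p ∈ Set.Icc (0 : ℝ) 1) (b : Bool) : 0 ≤ bitWeight p b := by
  cases b <;> simp [bitWeight, hp.1, hp.2]

lemma sum_bitWeight : ∑ b, bitWeight p b = 1 := by simp [bitWeight]

lemma cubeWeight_nonneg (hp : p ∈ Set.Icc (0 : ℝ) 1) (η : α → Bool) :
    0 ≤ cubeWeight p η :=
  prod_nonneg fun a _ => bitWeight_nonneg hp (η a)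

variable [DecidableEq α] [DecidableEq β]

def cubeExp (p : ℝ) (F : (α → Bool) → ℝ) : ℝ := ∑ η, cubeWeight p η * F η

lemma sum_cubeWeight : ∑ η : α → Bool, cubeWeight p η = 1 := by
  simp only [cubeWeight]
  rw [← Fintype.prod_sum fun _ b => bitWeight p b]
  simp only [sum_bitWeight, prod_const_one]

lemma cubeExp_const (c : ℝ) : cubeExp p (fun _ : α → Bool => c) = c := by
  rw [cubeExp, ← sum_mul, sum_cubeWeight, one_mul]

lemma cubeExp_add (F G : (α → Bool) → ℝ) :
    cubeExp p (fun η => F η + G η) = cubeExp p F + cubeExp p G := by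
  simp only [cubeExp, mul_add, sum_add_distrib]

lemma cubeExp_const_mul (c : ℝ) (F : (α → Bool) → ℝ) :
    cubeExp p (fun η => c * F η) = c * cubeExp p F := by
  simp only [cubeExp, mul_sum]
  exact sum_congr rfl fun _ _ => by ring

lemma cubeExp_mul_const (c : ℝ) (F : (α → Bool) → ℝ) :
    cubeExp p (fun η => F η * c) = cubeExp p F * c := by
  simpa only [mul_comm _ c] using cubeExp_const_mul c F

lemma cubeExp_sum {ι : Type*} (s : Finset ι) (F : ι → (α → Bool) → ℝ) :
    cubeExp p (fun η => ∑ i ∈ s, F i η) = ∑ i ∈ s, cubeExp p (F i) := by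
  simp only [cubeExp, mul_sum]
  exact sum_comm

lemma cubeExp_mono (hp : p ∈ Set.Icc (0 : ℝ) 1) {F G : (α → Bool) → ℝ}
    (h : ∀ η, F η ≤ G η) : cubeExp p F ≤ cubeExp p G :=
  sum_le_sum fun η _ => mul_le_mul_of_nonneg_left (h η) (cubeWeight_nonneg hp η)

lemma cubeExp_nonneg (hp : p ∈ Set.Icc (0 : ℝ) 1) {F : (α → Bool) → ℝ}
    (h : ∀ η, 0 ≤ F η) :
    0 ≤ cubeExp p F := by
  simpa [cubeExp_const] using cubeExp_mono (p := p) hp h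

lemma cubeWeight_update_mul (i : α) (η : α → Bool) (b : Bool) :
    cubeWeight p (update η i b) * bitWeight p (η i) = cubeWeight p η * bitWeight p b := by
  have h := prod_update_of_mem (mem_univ i) (fun a => bitWeight p (η a)) (bitWeight p b)
  simp only [cubeWeight, ← apply_update (fun _ => bitWeight p)] at h ⊢
  rw [h, ← mul_prod_erase univ _ (mem_univ i), sdiff_singleton_eq_erase]
  ring

theorem cubeExp_resample (i : α) (F : (α → Bool) → ℝ) :
    cubeExp p F = cubeExp p (fun η => ∑ b, bitWeight p b * F (update η i b)) := by
  let σ : Equiv.Perm ((α → Bool) × Bool) :=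
    Involutive.toPerm (fun x => (update x.1 i x.2, x.1 i)) fun x => by simp
  calc cubeExp p F = ∑ x : (α → Bool) × Bool, cubeWeight p x.1 * bitWeight p x.2 * F x.1 := by
        simp only [Fintype.sum_prod_type, cubeExp, ← sum_mul, ← mul_sum, sum_bitWeight, mul_one]
    _ = ∑ x : (α → Bool) × Bool,
          cubeWeight p x.1 * bitWeight p x.2 * F (update x.1 i x.2) := by
        refine (Fintype.sum_equiv σ _ _ fun x => ?_).symm
        show _ = cubeWeight p (update x.1 i x.2) * bitWeight p (x.1 i) * F (update x.1 i x.2)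
        rw [cubeWeight_update_mul]
    _ = _ := by
        simp only [Fintype.sum_prod_type, cubeExp, mul_sum, mul_assoc]

lemma cubeExp_comp_equiv (e : α ≃ β) (C : (α → Bool) → ℝ) :
    cubeExp p (fun η : β → Bool => C (η ∘ e)) = cubeExp p C := by
  refine Fintype.sum_equiv (e.arrowCongr (Equiv.refl Bool)).symm _ _ fun η => ?_
  have : (e.arrowCongr (Equiv.refl Bool)).symm η = η ∘ e := rfl
  rw [this, cubeWeight, cubeWeight, ← e.prod_comp]
  rfl

lemma cubeExp_comp_subtype_val (s : β → Prop) [DecidablePred s]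
    (C : ({b // s b} → Bool) → ℝ) :
    cubeExp p (fun η : β → Bool => C (η ∘ Subtype.val)) = cubeExp p C := by
  let e := Equiv.piEquivPiSubtypeProd s fun _ => Bool
  have hw : ∀ η : β → Bool, cubeWeight p η = cubeWeight p (e η).1 * cubeWeight p (e η).2 :=
    fun η => (Fintype.prod_subtype_mul_prod_subtype s _).symm
  calc cubeExp p (fun η : β → Bool => C (η ∘ Subtype.val))
      = ∑ x : ({b // s b} → Bool) × ({b // ¬ s b} → Bool),
          cubeWeight p x.1 * C x.1 * cubeWeight p x.2 := by
        refine Fintype.sum_equiv e _ _ fun η => ?_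
        change cubeWeight p η * C (e η).1 = _
        rw [hw]; ring
    _ = cubeExp p C := by
        simp only [Fintype.sum_prod_type, ← mul_sum]
        simp [sum_cubeWeight, cubeExp]

theorem cubeExp_comp_embedding (ρ : α ↪ β) (C : (α → Bool) → ℝ) :
    cubeExp p (fun η : β → Bool => C (η ∘ ρ)) = cubeExp p C := by
  let e : α ≃ {b // ∃ a, ρ a = b} := Equiv.ofInjective ρ ρ.injective
  calc cubeExp p (fun η : β → Bool => C (η ∘ ρ))
      = cubeExp p (fun η : β → Bool => (fun ζ => C (ζ ∘ e)) (η ∘ Subtype.val)) := rfl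
    _ = cubeExp p C := (cubeExp_comp_subtype_val _ _).trans (cubeExp_comp_equiv _ _)

/-- Pulling a configuration back along a partial injection and closing all remaining
coordinates yields a configuration stochastically dominated by a fresh sample. -/
theorem cubeExp_pullback_le (hp : p ∈ Set.Icc (0 : ℝ) 1) {s : α → Prop} [DecidablePred s]
    (ρ : {a // s a} ↪ β) {B : (α → Bool) → ℝ} (hB : Monotone B) :
    cubeExp p (fun η : β → Bool => B fun a => if h : s a then η (ρ ⟨a, h⟩) else false)
      ≤ cubeExp p B := by
  let fill : ({a // s a} → Bool) → α → Bool := fun ζ a =>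
    if h : s a then ζ ⟨a, h⟩ else false
  calc cubeExp p (fun η : β → Bool => B fun a => if h : s a then η (ρ ⟨a, h⟩) else false)
      = cubeExp p (fun η : β → Bool => (B ∘ fill) (η ∘ ρ)) := rfl
    _ = cubeExp p (fun ζ : α → Bool => B (fill (ζ ∘ Subtype.val))) := by
        rw [cubeExp_comp_embedding, ← cubeExp_comp_subtype_val s]; rfl
    _ ≤ cubeExp p B :=
        cubeExp_mono hp fun ζ => hB fun a => by by_cases h : s a <;> simp [fill, h]

end BernoulliCube

inductive DecisionTree (α : Type*)
  | leaf : Bool → DecisionTree α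
  | node : α → (Bool → DecisionTree α) → DecisionTree α

namespace DecisionTree

variable {α : Type*}

def eval : DecisionTree α → (α → Bool) → Bool
  | leaf b, _ => b
  | node i t, η => (t (η i)).eval η

def Reveals : DecisionTree α → (α → Bool) → α → Prop
  | leaf _, _, _ => False
  | node i t, η, j => j = i ∨ (t (η i)).Reveals η j

def height : DecisionTree α → ℕ
  | leaf _ => 0
  | node _ t => max (t false).height (t true).height + 1

lemma height_lt_height_node (i : α) (t : Bool → DecisionTree α) (b : Bool) :
    (t b).height < (node i t).height := by
  cases b <;> simp only [height] <;> omega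

variable [DecidableEq α]

def hardwire (e : α) (b : Bool) : DecisionTree α → DecisionTree α
  | leaf c => leaf c
  | node i t => if i = e then (t b).hardwire e b else node i fun c => (t c).hardwire e b

lemma height_hardwire_le (e : α) (b : Bool) (T : DecisionTree α) :
    (T.hardwire e b).height ≤ T.height := by
  induction T with
  | leaf c => simp [hardwire]
  | node i t ih =>
      by_cases h : i = e
      · subst h
        have := height_lt_height_node i t b
        have := ih b
        simp only [hardwire, if_true]; omega
      · have h0 := ih false; have h1 := ih true
        simp only [hardwire, h, if_false, height] at h0 h1 ⊢; omega

lemma eval_hardwire (e : α) (b : Bool) (T : DecisionTree α) (η : α → Bool) :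
    (T.hardwire e b).eval η = T.eval (update η e b) := by
  induction T with
  | leaf c => rfl
  | node i t ih =>
      by_cases h : i = e
      · subst h; simp [hardwire, eval, ih]
      · simp [hardwire, eval, h, ih]

lemma eval_hardwire_node (e : α) (t : Bool → DecisionTree α) (b : Bool) :
    ((t b).hardwire e b).eval = fun η => (node e t).eval (update η e b) := by
  ext η; simp [eval_hardwire, eval]

lemma Reveals.of_hardwire {e : α} {b : Bool} {T : DecisionTree α} {η : α → Bool} {j : α}
    (h : (T.hardwire e b).Reveals η j) : j ≠ e ∧ T.Reveals (update η e b) j := by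
  induction T with
  | leaf c => exact h.elim
  | node i t ih =>
      by_cases hie : i = e
      · subst hie
        simp only [hardwire, if_true] at h
        simpa [Reveals] using And.imp_right Or.inr (ih b h)
      · simp only [hardwire, hie, if_false, Reveals] at h
        rcases h with rfl | h
        · exact ⟨hie, Or.inl rfl⟩
        · simpa [Reveals, hie] using And.imp_right Or.inr (ih _ h)

end DecisionTree

section OSSS

open Finset

variable {α : Type*} [Fintype α] [DecidableEq α] {p : ℝ}

def boolDist (a b : Bool) : ℝ := if a = b then 0 else 1

lemma boolDist_nonneg (a b : Bool) : 0 ≤ boolDist a b := by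
  unfold boolDist; split <;> norm_num

lemma boolDist_comm (a b : Bool) : boolDist a b = boolDist b a := by
  cases a <;> cases b <;> rfl

@[simp] lemma boolDist_self (a : Bool) : boolDist a a = 0 := by simp [boolDist]

lemma boolDist_triangle (a b c : Bool) : boolDist a c ≤ boolDist a b + boolDist b c := by
  cases a <;> cases b <;> cases c <;> norm_num [boolDist]

def disagreement (p : ℝ) (g h : (α → Bool) → Bool) : ℝ :=
  cubeExp p fun η => boolDist (g η) (h η)

def indepDisagreement (p : ℝ) (g h : (α → Bool) → Bool) : ℝ :=
  cubeExp p fun η => cubeExp p fun η' => boolDist (g η) (h η')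

def resamplingInfluence (p : ℝ) (h : (α → Bool) → Bool) (i : α) : ℝ :=
  cubeExp p fun η => ∑ b, bitWeight p b * boolDist (h η) (h (update η i b))

def revealment (p : ℝ) (T : DecisionTree α) (j : α) : ℝ :=
  cubeExp p fun η => if T.Reveals η j then 1 else 0

lemma resamplingInfluence_nonneg (hp : p ∈ Set.Icc (0 : ℝ) 1) (h : (α → Bool) → Bool)
    (i : α) :
    0 ≤ resamplingInfluence p h i :=
  cubeExp_nonneg hp fun _ => sum_nonneg fun b _ =>
    mul_nonneg (bitWeight_nonneg hp b) (boolDist_nonneg _ _)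

lemma revealment_nonneg (hp : p ∈ Set.Icc (0 : ℝ) 1) (T : DecisionTree α) (j : α) :
    0 ≤ revealment p T j :=
  cubeExp_nonneg hp fun _ => by positivity

lemma indepDisagreement_eq_sum_restrict (g h : (α → Bool) → Bool) (e : α) :
    indepDisagreement p g h
      = ∑ b, bitWeight p b * indepDisagreement p (fun η => g (update η e b)) h := by
  rw [indepDisagreement, cubeExp_resample e]
  simp only [indepDisagreement, ← cubeExp_const_mul, ← cubeExp_sum]

lemma sum_disagreement_restrict_le (hp : p ∈ Set.Icc (0 : ℝ) 1) (g h : (α → Bool) → Bool)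
    (e : α) :
    ∑ b, bitWeight p b * disagreement p (fun η => g (update η e b)) h
      ≤ disagreement p g h + resamplingInfluence p h e := by
  rw [disagreement, cubeExp_resample e, resamplingInfluence, ← cubeExp_add]
  simp only [disagreement, ← cubeExp_const_mul, ← cubeExp_sum, ← sum_add_distrib, ← mul_add]
  refine cubeExp_mono hp fun η => sum_le_sum fun b _ =>
    mul_le_mul_of_nonneg_left ?_ (bitWeight_nonneg hp b)
  calc boolDist (g (update η e b)) (h η)
      ≤ boolDist (g (update η e b)) (h (update η e b)) + boolDist (h (update η e b)) (h η) :=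
        boolDist_triangle _ _ _
    _ = _ := by rw [boolDist_comm (h (update η e b))]

lemma revealment_node_ge (hp : p ∈ Set.Icc (0 : ℝ) 1) (e : α)
    (t : Bool → DecisionTree α) (j : α) :
    ∑ b, bitWeight p b * revealment p ((t b).hardwire e b) j + (if j = e then 1 else 0)
      ≤ revealment p (.node e t) j := by
  simp only [revealment]
  rw [cubeExp_resample e (fun η => if (DecisionTree.node e t).Reveals η j then 1 else 0)]
  simp only [← cubeExp_const_mul, ← cubeExp_sum]
  rw [← cubeExp_const (p := p) (α := α) (if j = e then (1 : ℝ) else 0), ← cubeExp_add]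
  refine cubeExp_mono hp fun η => ?_
  have key : ∀ b, (if ((t b).hardwire e b).Reveals η j then (1 : ℝ) else 0)
      + (if j = e then 1 else 0)
        ≤ if (DecisionTree.node e t).Reveals (update η e b) j then 1 else 0 := by
    intro b
    by_cases hr : ((t b).hardwire e b).Reveals η j
    · have := hr.of_hardwire
      simp [hr, this.1, DecisionTree.Reveals, this.2]
    · rw [if_neg hr, zero_add]
      by_cases hj : j = e
      · simp [hj, DecisionTree.Reveals]
      · rw [if_neg hj]; positivity
  calc ∑ b, bitWeight p b * (if ((t b).hardwire e b).Reveals η j then (1 : ℝ) else 0)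
        + (if j = e then 1 else 0)
      = ∑ b, bitWeight p b * ((if ((t b).hardwire e b).Reveals η j then (1 : ℝ) else 0)
        + (if j = e then 1 else 0)) := by
        simp only [mul_add, sum_add_distrib, ← sum_mul, sum_bitWeight, one_mul]
    _ ≤ _ := sum_le_sum fun b _ => mul_le_mul_of_nonneg_left (key b) (bitWeight_nonneg hp b)

/-- Two-function form of the OSSS inequality. Resample the root query, apply induction to
both hardwired subtrees, and pay the influence of the root for the resampling. -/
theorem indepDisagreement_le (hp : p ∈ Set.Icc (0 : ℝ) 1) (h : (α → Bool) → Bool) :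
    ∀ T : DecisionTree α, indepDisagreement p T.eval h
      ≤ disagreement p T.eval h + ∑ j, revealment p T j * resamplingInfluence p h j
  | .leaf c => by
      have : indepDisagreement p (DecisionTree.leaf c).eval h
          = disagreement p (DecisionTree.leaf c).eval h := by
        simp only [indepDisagreement, disagreement, DecisionTree.eval, cubeExp_const]
      rw [this]
      exact le_add_of_nonneg_right (sum_nonneg fun j _ =>
        mul_nonneg (revealment_nonneg hp _ j) (resamplingInfluence_nonneg hp h j))
  | .node e t => by
      set T := DecisionTree.node e t
      set G := fun b => (t b).hardwire e b
      have ih := fun b => indepDisagreement_le hp h (G b)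
      calc indepDisagreement p T.eval h
          = ∑ b, bitWeight p b * indepDisagreement p (G b).eval h := by
            simp only [G, DecisionTree.eval_hardwire_node]
            exact indepDisagreement_eq_sum_restrict _ _ e
        _ ≤ ∑ b, bitWeight p b * (disagreement p (G b).eval h
              + ∑ j, revealment p (G b) j * resamplingInfluence p h j) :=
            sum_le_sum fun b _ => mul_le_mul_of_nonneg_left (ih b) (bitWeight_nonneg hp b)
        _ = ∑ b, bitWeight p b * disagreement p (G b).eval h
              + ∑ j, (∑ b, bitWeight p b * revealment p (G b) j)
                * resamplingInfluence p h j := by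
            simp only [mul_add, sum_add_distrib, mul_sum, sum_mul, mul_assoc]
            rw [sum_comm (s := univ) (t := univ)]
        _ ≤ disagreement p T.eval h + resamplingInfluence p h e
              + ∑ j, (∑ b, bitWeight p b * revealment p (G b) j)
                * resamplingInfluence p h j := by
            gcongr
            simpa only [G, DecisionTree.eval_hardwire_node] using
              sum_disagreement_restrict_le hp T.eval h e
        _ = disagreement p T.eval h + ∑ j, (∑ b, bitWeight p b * revealment p (G b) j
              + if j = e then 1 else 0) * resamplingInfluence p h j := by
            simp only [add_mul, sum_add_distrib, ite_mul, one_mul, zero_mul, sum_ite_eq', mem_univ,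
              if_true]
            ring
        _ ≤ disagreement p T.eval h + ∑ j, revealment p T j * resamplingInfluence p h j := by
            gcongr with j
            · exact resamplingInfluence_nonneg hp h j
            · exact revealment_node_ge hp e t j
termination_by T => T.height
decreasing_by
  exact lt_of_le_of_lt (DecisionTree.height_hardwire_le _ _ _)
    (DecisionTree.height_lt_height_node _ _ _)

/-- **OSSS inequality** `2 Var f ≤ ∑ⱼ δⱼ(T) Inf'ⱼ(f)`, written with
`indepDisagreement p f f = ℙ[f(η) ≠ f(η')] = 2 Var f`. -/
theorem osss (hp : p ∈ Set.Icc (0 : ℝ) 1) (T : DecisionTree α) :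
    indepDisagreement p T.eval T.eval
      ≤ ∑ j, revealment p T j * resamplingInfluence p T.eval j := by
  simpa [disagreement, cubeExp_const] using indepDisagreement_le hp T.eval T

def flipInfluence (p : ℝ) (h : (α → Bool) → Bool) (i : α) : ℝ :=
  cubeExp p fun η => boolDist (h η) (h (update η i (!η i)))

lemma resamplingInfluence_eq (h : (α → Bool) → Bool) (i : α) :
    resamplingInfluence p h i = 2 * (p * (1 - p)) * flipInfluence p h i := by
  rw [resamplingInfluence, flipInfluence, cubeExp_resample i, ← cubeExp_const_mul]
  conv_rhs => rw [cubeExp_resample i]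
  congr 1; ext η
  simp only [Fintype.sum_bool, update_idem, update_self, Bool.not_true, Bool.not_false,
    boolDist_self, bitWeight]
  rw [boolDist_comm (h (update η i false))]
  simp only [if_true, Bool.false_eq_true, if_false]
  ring

lemma indepDisagreement_self (f : (α → Bool) → Bool) :
    indepDisagreement p f f
      = 2 * cubeExp p (fun η => if f η then 1 else 0)
        * (1 - cubeExp p (fun η => if f η then 1 else 0)) := by
  set m := cubeExp p (fun η => if f η then (1 : ℝ) else 0)
  have hdist : ∀ a b : Bool, boolDist a b
      = (if a then 1 else 0) + (1 - 2 * (if a then 1 else 0)) * (if b then 1 else 0) := by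
    intro a b; cases a <;> cases b <;> norm_num [boolDist]
  have hinner : ∀ a : Bool, cubeExp p (fun η' => boolDist a (f η'))
      = (if a then 1 else 0) + (1 - 2 * (if a then 1 else 0)) * m := fun a => by
    simp only [hdist, cubeExp_add, cubeExp_const, cubeExp_const_mul, m]
  have houter : indepDisagreement p f f
      = cubeExp p (fun η => (if f η then 1 else 0) * (1 - 2 * m) + m) := by
    simp only [indepDisagreement, hinner]
    congr 1; ext η; ring
  rw [houter, cubeExp_add, cubeExp_mul_const, cubeExp_const]
  ring

theorem card_mul_indepDisagreement_le (hp : p ∈ Set.Icc (0 : ℝ) 1) {ι : Type*} (K : Finset ι)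
    (T : ι → DecisionTree α) {f : (α → Bool) → Bool} (hT : ∀ k ∈ K, (T k).eval = f)
    {R : ℝ}
    (hR : ∀ j, ∑ k ∈ K, revealment p (T k) j ≤ R) :
    K.card * indepDisagreement p f f ≤ R * ∑ j, resamplingInfluence p f j := by
  calc K.card * indepDisagreement p f f = ∑ k ∈ K, indepDisagreement p f f := by simp
    _ ≤ ∑ k ∈ K, ∑ j, revealment p (T k) j * resamplingInfluence p f j :=
        sum_le_sum fun k hk => hT k hk ▸ osss hp (T k)
    _ = ∑ j, (∑ k ∈ K, revealment p (T k) j) * resamplingInfluence p f j := by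
        rw [sum_comm]; simp only [sum_mul]
    _ ≤ ∑ j, R * resamplingInfluence p f j :=
        sum_le_sum fun j _ => mul_le_mul_of_nonneg_right (hR j) (resamplingInfluence_nonneg hp f j)
    _ = R * ∑ j, resamplingInfluence p f j := (mul_sum _ _ _).symm

end OSSS

lemma Relation.ReflTransGen.exists_eq_level {V : Type*} {r : V → V → Prop} {g : V → ℕ}
    (hr : ∀ a b, r a b → g b ≤ g a + 1) {x y : V} (h : Relation.ReflTransGen r x y) {t : ℕ}
    (hx : g x ≤ t) (hy : t ≤ g y) :
    ∃ w, g w = t ∧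
      Relation.ReflTransGen (fun a b => r a b ∧ g a ≤ t ∧ g b ≤ t) x w := by
  induction h using Relation.ReflTransGen.head_induction_on with
  | refl => exact ⟨y, le_antisymm hx hy, .refl⟩
  | @head a c hac _ ih =>
      rcases hx.eq_or_lt with hat | hat
      · exact ⟨a, hat, .refl⟩
      · have hc : g c ≤ t := (hr a c hac).trans hat
        obtain ⟨w, hw, hpath⟩ := ih hc
        exact ⟨w, hw, .head ⟨hac, hat.le, hc⟩ hpath⟩

section Lattice

variable {d : ℕ}

lemma supNorm_le_iff {x : PVert d} {m : ℕ} : supNorm x ≤ m ↔ ∀ j, (x j).natAbs ≤ m := by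
  simp [supNorm, Finset.sup_le_iff]

lemma natAbs_le_supNorm (x : PVert d) (j : Fin d) : (x j).natAbs ≤ supNorm x :=
  supNorm_le_iff.mp le_rfl j

@[simp] lemma supNorm_zero : supNorm (0 : PVert d) = 0 :=
  Nat.le_zero.mp (supNorm_le_iff.mpr fun _ => by simp)

@[simp] lemma supNorm_neg (x : PVert d) : supNorm (-x) = supNorm x := by
  simp [supNorm]

lemma supNorm_add_le (x y : PVert d) : supNorm (x + y) ≤ supNorm x + supNorm y :=
  supNorm_le_iff.mpr fun j => (Int.natAbs_add_le (x j) (y j)).trans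
    (add_le_add (natAbs_le_supNorm x j) (natAbs_le_supNorm y j))

lemma supNorm_le_supNorm_sub_add (x y : PVert d) : supNorm x ≤ supNorm (x - y) + supNorm y := by
  simpa using supNorm_add_le (x - y) y

lemma supNorm_unitVec_le (i : Fin d) : supNorm (unitVec d i) ≤ 1 :=
  supNorm_le_iff.mpr fun j => by by_cases h : j = i <;> simp [unitVec, h]

lemma mem_boxF {x : PVert d} {n : ℕ} : x ∈ boxF d n ↔ supNorm x ≤ n := by
  simp only [boxF, Fintype.mem_piFinset, Finset.mem_Icc, supNorm_le_iff]
  exact forall_congr' fun j => by omega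

lemma mem_boxEdges {n : ℕ} {e : PEdge d} :
    e ∈ boxEdges d n ↔ e.1 ∈ box d n ∧ e.1 + unitVec d e.2 ∈ box d n := by
  simp [boxEdges, edgesIn, mem_boxF, box]

def edgeJoins (e : PEdge d) (a b : PVert d) : Prop :=
  (a = e.1 ∧ b = e.1 + unitVec d e.2) ∨ (b = e.1 ∧ a = e.1 + unitVec d e.2)

lemma openAdj_iff {ω : PConfig d} {a b : PVert d} :
    openAdj ω a b ↔ ∃ e, ω e = true ∧ edgeJoins e a b := by
  constructor
  · rintro ⟨i, ⟨rfl, h⟩ | ⟨rfl, h⟩⟩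
    · exact ⟨(a, i), h, Or.inl ⟨rfl, rfl⟩⟩
    · exact ⟨(b, i), h, Or.inr ⟨rfl, rfl⟩⟩
  · rintro ⟨⟨x, i⟩, h, ⟨rfl, rfl⟩ | ⟨rfl, rfl⟩⟩
    · exact ⟨i, Or.inl ⟨rfl, h⟩⟩
    · exact ⟨i, Or.inr ⟨rfl, h⟩⟩

lemma edgeJoins.mem_boxEdges {e : PEdge d} {a b : PVert d} {n : ℕ} (h : edgeJoins e a b)
    (ha : a ∈ box d n) (hb : b ∈ box d n) : e ∈ boxEdges d n := by
  rcases h with ⟨rfl, rfl⟩ | ⟨rfl, rfl⟩ <;>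
    exact _root_.mem_boxEdges.mpr ⟨‹_›, ‹_›⟩

lemma openAdj.symm {ω : PConfig d} {a b : PVert d} (h : openAdj ω a b) : openAdj ω b a := by
  obtain ⟨i, h | h⟩ := h
  exacts [⟨i, Or.inr h⟩, ⟨i, Or.inl h⟩]

lemma openAdj.mono {ω ω' : PConfig d} (hω : ω ≤ ω') {a b : PVert d} (h : openAdj ω a b) :
    openAdj ω' a b := by
  obtain ⟨e, he, hj⟩ := openAdj_iff.mp h
  exact openAdj_iff.mpr ⟨e, Bool.le_iff_imp.mp (hω e) he, hj⟩

lemma openAdj.supNorm_sub_le {ω : PConfig d} {a b : PVert d} (h : openAdj ω a b)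
    (z : PVert d) : supNorm (b - z) ≤ supNorm (a - z) + 1 := by
  obtain ⟨i, ⟨rfl, -⟩ | ⟨rfl, -⟩⟩ := h
  · calc supNorm (a + unitVec d i - z) = supNorm ((a - z) + unitVec d i) := by abel_nf
      _ ≤ _ := (supNorm_add_le _ _).trans (by grind [supNorm_unitVec_le i])
  · calc supNorm (b - z) = supNorm ((b + unitVec d i - z) + -unitVec d i) := by abel_nf
      _ ≤ _ := (supNorm_add_le _ _).trans (by grind [supNorm_neg, supNorm_unitVec_le i])

lemma connIn.mono {ω ω' : PConfig d} (hω : ω ≤ ω') {S : Set (PVert d)} {x y : PVert d}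
    (h : connIn ω S x y) : connIn ω' S x y :=
  Relation.ReflTransGen.mono (fun _ _ hab => ⟨hab.1, hab.2.1, hab.2.2.mono hω⟩) _ _ h

lemma connIn.symm {ω : PConfig d} {S : Set (PVert d)} {x y : PVert d}
    (h : connIn ω S x y) : connIn ω S y x :=
  Relation.ReflTransGen.mono (fun _ _ hab => ⟨hab.2.1, hab.1, hab.2.2.symm⟩) _ _
    (Relation.ReflTransGen.swap _ _ h)

lemma connIn_congr {ω ω' : PConfig d} {n : ℕ} (hω : ∀ e ∈ boxEdges d n, ω e = ω' e)
    {x y : PVert d} (h : connIn ω (box d n) x y) : connIn ω' (box d n) x y := by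
  refine Relation.ReflTransGen.mono (fun a b ⟨ha, hb, hab⟩ => ⟨ha, hb, ?_⟩) _ _ h
  obtain ⟨e, he, hj⟩ := openAdj_iff.mp hab
  exact openAdj_iff.mpr ⟨e, hω e (hj.mem_boxEdges ha hb) ▸ he, hj⟩

lemma zeroToBoundary_congr {ω ω' : PConfig d} {n : ℕ}
    (hω : ∀ e ∈ boxEdges d n, ω e = ω' e) :
    zeroToBoundary d n ω ↔ zeroToBoundary d n ω' :=
  ⟨fun ⟨y, hy, hc⟩ => ⟨y, hy, connIn_congr hω hc⟩,
    fun ⟨y, hy, hc⟩ => ⟨y, hy, connIn_congr (fun e he => (hω e he).symm) hc⟩⟩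

lemma zeroToBoundary_mono {n : ℕ} : Monotone (zeroToBoundary d n) :=
  fun _ _ hω ⟨y, hy, hc⟩ => ⟨y, hy, hc.mono hω⟩

end Lattice

section Exploration

variable {d n k : ℕ}

def extendClosed (E : Finset (PEdge d)) (η : {e // e ∈ E} → Bool) : PConfig d :=
  fun e => if h : e ∈ E then η ⟨e, h⟩ else false

lemma extendClosed_mono (E : Finset (PEdge d)) : Monotone (extendClosed E) :=
  fun η η' h e => by unfold extendClosed; split <;> simp [h _]

def ConnToSphere (d n k : ℕ) (ω : PConfig d) (v : PVert d) : Prop :=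
  ∃ u, supNorm u = k ∧ connIn ω (box d n) u v

def TouchesSphereCluster (d n k : ℕ) (ω : PConfig d) (e : PEdge d) : Prop :=
  ConnToSphere d n k ω e.1 ∨ ConnToSphere d n k ω (e.1 + unitVec d e.2)

lemma ConnToSphere.mono {ω ω' : PConfig d} (hω : ω ≤ ω') {v : PVert d}
    (h : ConnToSphere d n k ω v) : ConnToSphere d n k ω' v :=
  let ⟨u, hu, hc⟩ := h; ⟨u, hu, hc.mono hω⟩

lemma TouchesSphereCluster.mono {ω ω' : PConfig d} (hω : ω ≤ ω') {e : PEdge d}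
    (h : TouchesSphereCluster d n k ω e) : TouchesSphereCluster d n k ω' e :=
  h.imp (·.mono hω) (·.mono hω)

lemma connIn_of_agree_on_touching {ξ ω : PConfig d}
    (hagree : ∀ e ∈ boxEdges d n, TouchesSphereCluster d n k ξ e → ξ e = ω e)
    {u v : PVert d}
    (hu : ConnToSphere d n k ξ u) (h : connIn ω (box d n) u v) : connIn ξ (box d n) u v := by
  induction h using Relation.ReflTransGen.head_induction_on with
  | refl => exact .refl
  | @head a c hac _ ih =>
      obtain ⟨ha, hc, hadj⟩ := hac
      obtain ⟨e, he, hj⟩ := openAdj_iff.mp hadj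
      have htouch : TouchesSphereCluster d n k ξ e := by
        rcases hj with ⟨rfl, -⟩ | ⟨-, rfl⟩ <;> [exact .inl hu; exact .inr hu]
      have hstep : openAdj ξ a c :=
        openAdj_iff.mpr ⟨e, (hagree e (hj.mem_boxEdges ha hc) htouch).trans he, hj⟩
      obtain ⟨u₀, hu₀, hp⟩ := hu
      exact .head ⟨ha, hc, hstep⟩ (ih ⟨u₀, hu₀, .tail hp ⟨ha, hc, hstep⟩⟩)

/-- Every path from `0` to `∂Λ_n` crosses `∂Λ_k`, so it lies in the cluster of `∂Λ_k`. -/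
lemma zeroToBoundary_iff_of_agree_on_touching {ξ ω : PConfig d} (hkn : k ≤ n)
    (hξω : ξ ≤ ω)
    (hagree : ∀ e ∈ boxEdges d n, TouchesSphereCluster d n k ξ e → ξ e = ω e) :
    zeroToBoundary d n ω ↔ zeroToBoundary d n ξ := by
  refine ⟨fun ⟨y, hy, hpath⟩ => ?_, zeroToBoundary_mono hξω⟩
  obtain ⟨v, hv, hpre⟩ := Relation.ReflTransGen.exists_eq_level (g := supNorm)
    (fun a b hab => by simpa using hab.2.2.supNorm_sub_le 0) hpath (t := k)
    (by simp) (hy ▸ hkn)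
  have hv0 : connIn ω (box d n) v 0 :=
    connIn.symm (Relation.ReflTransGen.mono (fun _ _ hab => hab.1) _ _ hpre)
  have hvξ : ConnToSphere d n k ξ v := ⟨v, hv, .refl⟩
  exact ⟨y, hy, (connIn_of_agree_on_touching hagree hvξ hv0).symm.trans
    (connIn_of_agree_on_touching hagree hvξ (hv0.trans hpath))⟩

abbrev BoxEdge (d n : ℕ) := {e // e ∈ boxEdges d n}

def revealedConfig (Q : Finset (BoxEdge d n)) (κ : BoxEdge d n → Bool) : PConfig d :=
  extendClosed _ fun i => if i ∈ Q then κ i else false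

lemma revealedConfig_le {Q : Finset (BoxEdge d n)} {κ η : BoxEdge d n → Bool}
    (hκ : ∀ i ∈ Q, κ i = η i) : revealedConfig Q κ ≤ extendClosed _ η :=
  extendClosed_mono _ fun i => by by_cases hi : i ∈ Q <;> simp [hi, hκ]

/-- Explores the open cluster of `∂Λ_k` inside `Λ_n`, one edge touching the revealed cluster at
a time; `Q` is the set of revealed edges and `κ` records their states. -/
def exploreTree (d n k : ℕ) (Q : Finset (BoxEdge d n)) (κ : BoxEdge d n → Bool) :
    DecisionTree (BoxEdge d n) :=
  if h : ∃ i ∉ Q, TouchesSphereCluster d n k (revealedConfig Q κ) i.1 then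
    .node h.choose fun b => exploreTree d n k (insert h.choose Q) (update κ h.choose b)
  else .leaf (decide (zeroToBoundary d n (revealedConfig Q κ)))
termination_by (Finset.univ \ Q).card
decreasing_by
  rw [Finset.sdiff_insert]
  exact Finset.card_erase_lt_of_mem (Finset.mem_sdiff.mpr ⟨Finset.mem_univ _, h.choose_spec.1⟩)

lemma agree_insert_update {Q : Finset (BoxEdge d n)} {κ η : BoxEdge d n → Bool}
    (hκ : ∀ i ∈ Q, κ i = η i) (c : BoxEdge d n) :
    ∀ i ∈ insert c Q, update κ c (η c) i = η i := by
  intro i hi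
  by_cases hic : i = c
  · subst hic; simp
  · rw [update_of_ne hic]; exact hκ i ((Finset.mem_insert.mp hi).resolve_left hic)

lemma zeroToBoundary_iff_revealedConfig (hkn : k ≤ n) {Q : Finset (BoxEdge d n)}
    {κ η : BoxEdge d n → Bool} (hκ : ∀ i ∈ Q, κ i = η i)
    (hstop : ¬ ∃ i ∉ Q, TouchesSphereCluster d n k (revealedConfig Q κ) i.1) :
    zeroToBoundary d n (extendClosed _ η) ↔ zeroToBoundary d n (revealedConfig Q κ) := by
  refine zeroToBoundary_iff_of_agree_on_touching hkn (revealedConfig_le hκ) fun e he htouch => ?_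
  have hQ : ⟨e, he⟩ ∈ Q := by by_contra hQ; exact hstop ⟨⟨e, he⟩, hQ, htouch⟩
  simp only [revealedConfig, extendClosed, dif_pos he, if_pos hQ, hκ _ hQ]

lemma eval_exploreTree (hkn : k ≤ n) (η : BoxEdge d n → Bool) (Q : Finset (BoxEdge d n))
    (κ : BoxEdge d n → Bool) (hκ : ∀ i ∈ Q, κ i = η i) :
    (exploreTree d n k Q κ).eval η = decide (zeroToBoundary d n (extendClosed _ η)) := by
  induction Q, κ using exploreTree.induct d n k with
  | case1 Q κ h ih =>
      rw [exploreTree, dif_pos h]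
      exact ih (η h.choose) (agree_insert_update hκ _)
  | case2 Q κ h =>
      rw [exploreTree, dif_neg h, DecisionTree.eval, zeroToBoundary_iff_revealedConfig hkn hκ h]

lemma TouchesSphereCluster.of_reveals_exploreTree {η : BoxEdge d n → Bool} {i : BoxEdge d n}
    (Q : Finset (BoxEdge d n)) (κ : BoxEdge d n → Bool) (hκ : ∀ i ∈ Q, κ i = η i)
    (h : (exploreTree d n k Q κ).Reveals η i) :
    TouchesSphereCluster d n k (extendClosed _ η) i.1 := by
  induction Q, κ using exploreTree.induct d n k with
  | case1 Q κ hex ih =>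
      rw [exploreTree, dif_pos hex] at h
      rcases h with rfl | h
      · exact hex.choose_spec.2.mono (revealedConfig_le hκ)
      · exact ih (η hex.choose) (agree_insert_update hκ _) h
  | case2 Q κ hex =>
      rw [exploreTree, dif_neg hex] at h
      exact h.elim

end Exploration

section Revealment

variable {d n k : ℕ} {p : ℝ}

def translateConfig (z : PVert d) (ω : PConfig d) : PConfig d := fun e => ω (e.1 + z, e.2)

lemma openAdj.translate {ω : PConfig d} {a b z : PVert d} (h : openAdj ω a b) :
    openAdj (translateConfig z ω) (a - z) (b - z) := by
  obtain ⟨i, ⟨rfl, h⟩ | ⟨rfl, h⟩⟩ := h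
  · exact ⟨i, Or.inl ⟨by abel, by simpa [translateConfig] using h⟩⟩
  · exact ⟨i, Or.inr ⟨by abel, by simpa [translateConfig] using h⟩⟩

/-- A path from `z` to `∂Λ_k` leaves the box `z + Λ_r` for `r = |k - ‖z‖|`. -/
lemma ConnToSphere.zeroToBoundary_translate {ω : PConfig d} {z : PVert d}
    (h : ConnToSphere d n k ω z) :
    zeroToBoundary d ((k : ℤ) - supNorm z).natAbs (translateConfig z ω) := by
  obtain ⟨u, hu, hpath⟩ := h
  have hr : ((k : ℤ) - supNorm z).natAbs ≤ supNorm (u - z) := by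
    have h1 := supNorm_le_supNorm_sub_add u z
    have h2 := supNorm_le_supNorm_sub_add z u
    rw [← neg_sub, supNorm_neg] at h2
    omega
  obtain ⟨w, hw, hzw⟩ := Relation.ReflTransGen.exists_eq_level (g := fun v => supNorm (v - z))
    (fun a b hab => hab.2.2.supNorm_sub_le z) hpath.symm (by simp) hr
  refine ⟨w - z, hw, ?_⟩
  rw [← sub_self z]
  exact Relation.ReflTransGen.lift (· - z)
    (fun a b ⟨⟨_, _, hab⟩, ha, hb⟩ => ⟨ha, hb, hab.translate⟩) _ _ hzw

lemma cylProb_eq_cubeExp (E : Finset (PEdge d)) (A : PConfig d → Prop) :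
    cylProb d p E A = cubeExp p fun η => if A (extendClosed E η) then 1 else 0 := rfl

lemma cubeExp_connToSphere_le (hp : p ∈ Set.Icc (0 : ℝ) 1) (z : PVert d) :
    cubeExp p (fun η : BoxEdge d n → Bool =>
        if ConnToSphere d n k (extendClosed _ η) z then 1 else 0)
      ≤ theta d p ((k : ℤ) - supNorm z).natAbs := by
  set r := ((k : ℤ) - supNorm z).natAbs
  let s : BoxEdge d r → Prop := fun a => (a.1.1 + z, a.1.2) ∈ boxEdges d n
  let ρ : {a // s a} ↪ BoxEdge d n :=
    ⟨fun a => ⟨(a.1.1.1 + z, a.1.1.2), a.2⟩, fun a b hab => by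
      simp only [Subtype.mk.injEq, Prod.mk.injEq, add_left_inj] at hab
      exact Subtype.ext (Subtype.ext (Prod.ext hab.1 hab.2))⟩
  have hB : Monotone fun ζ : BoxEdge d r → Bool =>
      if zeroToBoundary d r (extendClosed _ ζ) then (1 : ℝ) else 0 := fun ζ ζ' h => by
    by_cases hz : zeroToBoundary d r (extendClosed _ ζ)
    · simp [hz, zeroToBoundary_mono (extendClosed_mono _ h) hz]
    · simp only [if_neg hz]; split <;> norm_num
  rw [theta, cylProb_eq_cubeExp]
  refine le_trans (cubeExp_mono hp fun η => ?_) (cubeExp_pullback_le hp ρ hB)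
  by_cases hc : ConnToSphere d n k (extendClosed _ η) z
  · rw [if_pos hc, if_pos]
    refine (zeroToBoundary_congr fun e he => ?_).mp hc.zeroToBoundary_translate
    simp [translateConfig, extendClosed, he, s, ρ]
    rfl
  · rw [if_neg hc]; split <;> norm_num

lemma revealment_exploreTree_le (hp : p ∈ Set.Icc (0 : ℝ) 1) (i : BoxEdge d n) :
    revealment p (exploreTree d n k ∅ fun _ => false) i
      ≤ theta d p ((k : ℤ) - supNorm i.1.1).natAbs
        + theta d p ((k : ℤ) - supNorm (i.1.1 + unitVec d i.1.2)).natAbs := by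
  refine le_trans ?_ (add_le_add (cubeExp_connToSphere_le (n := n) hp _)
    (cubeExp_connToSphere_le (n := n) hp _))
  rw [revealment, ← cubeExp_add]
  refine cubeExp_mono hp fun η => ?_
  by_cases h : (exploreTree d n k ∅ fun _ => false).Reveals η i
  · rcases TouchesSphereCluster.of_reveals_exploreTree ∅ _ (by simp) h with hc | hc <;>
      simp only [h, hc, if_true] <;> split <;> norm_num
  · rw [if_neg h]; positivity

end Revealment

lemma sum_Ioc_natAbs_sub_le {f : ℕ → ℝ} (hf : ∀ j, 0 ≤ f j) (hf0 : ∀ j, f j ≤ f 0)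
    {m n : ℕ} (hmn : m ≤ n) :
    ∑ k ∈ Finset.Ioc 0 n, f ((k : ℤ) - m).natAbs ≤ 2 * ∑ j ∈ Finset.range n, f j := by
  have hbelow :
      ∑ k ∈ Finset.Ioc 0 m, f ((k : ℤ) - m).natAbs = ∑ j ∈ Finset.range m, f j :=
    Finset.sum_nbij' (fun k => m - k) (fun j => m - j) (by simp; omega) (by simp)
      (by simp; omega) (by simp; omega) (fun k hk => by simp at hk; congr 1; omega)
  have habove : ∑ k ∈ Finset.Ioc m n, f ((k : ℤ) - m).natAbs
      = ∑ j ∈ Finset.range (n - m), f (j + 1) :=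
    Finset.sum_nbij' (fun k => k - m - 1) (fun j => j + m + 1) (by simp; omega)
      (by simp; omega) (by simp; omega) (by simp; omega) (fun k hk => by simp at hk; congr 1; omega)
  have hshift :
      ∑ j ∈ Finset.range (n - m), f (j + 1) ≤ ∑ j ∈ Finset.range (n - m), f j := by
    have h := Finset.sum_range_succ' f (n - m)
    rw [Finset.sum_range_succ] at h
    linarith [hf0 (n - m)]
  have hsub : ∀ l ≤ n, ∑ j ∈ Finset.range l, f j ≤ ∑ j ∈ Finset.range n, f j :=
    fun l hl =>
    Finset.sum_le_sum_of_subset_of_nonneg (Finset.range_subset_range.mpr hl) fun j _ _ => hf j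
  rw [← Finset.sum_Ioc_consecutive _ (Nat.zero_le m) hmn, hbelow, habove]
  linarith [hsub m hmn, hsub (n - m) (Nat.sub_le n m)]

section InfluenceBound

variable {d n : ℕ} {p : ℝ}

def zeroToBoundaryFn (d n : ℕ) (η : BoxEdge d n → Bool) : Bool :=
  decide (zeroToBoundary d n (extendClosed _ η))

lemma update_extendClosed_not {E : Finset (PEdge d)} (η : {e // e ∈ E} → Bool)
    (i : {e // e ∈ E}) :
    update (extendClosed E η) i.1 (!extendClosed E η i.1)
      = extendClosed E (update η i (!η i)) := by
  ext e
  by_cases he : e = i.1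
  · subst he; simp [extendClosed]
  · have : ∀ h : e ∈ E, (⟨e, h⟩ : {e // e ∈ E}) ≠ i := fun _ hi =>
      he (congrArg Subtype.val hi)
    simp [extendClosed, update_of_ne he, this]

lemma cylInfluence_eq_flipInfluence (E : Finset (PEdge d)) (A : PConfig d → Prop)
    (i : {e // e ∈ E}) :
    cylInfluence d p E A i.1 = flipInfluence p (fun η => decide (A (extendClosed E η))) i := by
  refine Finset.sum_congr rfl fun η _ => congrArg _ ?_
  change |(if A (extendClosed E η) then (1 : ℝ) else 0) -
      (if A (update (extendClosed E η) i.1 (!extendClosed E η i.1)) then 1 else 0)| = _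
  rw [update_extendClosed_not]
  by_cases h₁ : A (extendClosed E η) <;>
    by_cases h₂ : A (extendClosed E (update η i (!η i))) <;> simp [h₁, h₂, boolDist]

lemma theta_eq_cubeExp :
    theta d p n = cubeExp p fun η => if zeroToBoundaryFn d n η then 1 else 0 := by
  simp [theta, cylProb_eq_cubeExp, zeroToBoundaryFn]

lemma theta_nonneg (hp : p ∈ Set.Icc (0 : ℝ) 1) (n : ℕ) : 0 ≤ theta d p n :=
  cubeExp_nonneg hp fun _ => by positivity

lemma theta_le_one (hp : p ∈ Set.Icc (0 : ℝ) 1) (n : ℕ) : theta d p n ≤ 1 :=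
  (cubeExp_mono hp fun _ => by split <;> norm_num).trans_eq (cubeExp_const 1)

lemma theta_zero : theta d p 0 = 1 := by
  rw [theta, cylProb_eq_cubeExp]
  have h : ∀ ω, zeroToBoundary d 0 ω := fun _ => ⟨0, supNorm_zero, .refl⟩
  simp only [h, if_true, cubeExp_const]

lemma one_le_sum_range_theta (hp : p ∈ Set.Icc (0 : ℝ) 1) (hn : 1 ≤ n) :
    1 ≤ ∑ k ∈ Finset.range n, theta d p k := by
  rw [← theta_zero (d := d) (p := p)]
  exact Finset.single_le_sum (fun k _ => theta_nonneg hp k) (Finset.mem_range.mpr hn)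

lemma sum_revealment_exploreTree_le (hp : p ∈ Set.Icc (0 : ℝ) 1) (i : BoxEdge d n) :
    ∑ k ∈ Finset.Ioc 0 n, revealment p (exploreTree d n k ∅ fun _ => false) i
      ≤ 4 * ∑ k ∈ Finset.range n, theta d p k := by
  have hθ := fun m (hm : m ≤ n) => sum_Ioc_natAbs_sub_le (f := theta d p)
    (theta_nonneg hp) (fun j => (theta_le_one hp j).trans_eq theta_zero.symm) hm
  obtain ⟨h₁, h₂⟩ := mem_boxEdges.mp i.2
  calc _ ≤ ∑ k ∈ Finset.Ioc 0 n, (theta d p ((k : ℤ) - supNorm i.1.1).natAbs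
          + theta d p ((k : ℤ) - supNorm (i.1.1 + unitVec d i.1.2)).natAbs) :=
        Finset.sum_le_sum fun k _ => revealment_exploreTree_le hp i
    _ ≤ _ := by rw [Finset.sum_add_distrib]; linarith [hθ _ h₁, hθ _ h₂]

lemma nat_mul_theta_mul_one_sub_le (hp : p ∈ Set.Icc (0 : ℝ) 1) :
    n * (theta d p n * (1 - theta d p n))
      ≤ 4 * (p * (1 - p)) * (∑ k ∈ Finset.range n, theta d p k)
        * ∑ e ∈ boxEdges d n, cylInfluence d p (boxEdges d n) (zeroToBoundary d n) e := by
  have h := card_mul_indepDisagreement_le hp (Finset.Ioc 0 n)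
    (fun k => exploreTree d n k ∅ fun _ => false) (f := zeroToBoundaryFn d n)
    (fun k hk => funext fun η => eval_exploreTree (Finset.mem_Ioc.mp hk).2 η ∅ _ (by simp))
    (sum_revealment_exploreTree_le hp)
  rw [Nat.card_Ioc, indepDisagreement_self, ← theta_eq_cubeExp] at h
  have hinf : ∑ i, resamplingInfluence p (zeroToBoundaryFn d n) i = 2 * (p * (1 - p))
      * ∑ e ∈ boxEdges d n, cylInfluence d p (boxEdges d n) (zeroToBoundary d n) e := by
    simp only [resamplingInfluence_eq, ← Finset.mul_sum]
    rw [← Finset.sum_coe_sort (boxEdges d n)]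
    exact congrArg _ (Finset.sum_congr rfl fun i _ => (cylInfluence_eq_flipInfluence _ _ i).symm)
  rw [hinf, Nat.sub_zero] at h
  linarith

end InfluenceBound

end

theorem influence_sum_lower_bound_general (d : ℕ) (p : ℝ)
    (hp : p ∈ Set.Ioo (0 : ℝ) 1) (n : ℕ) (hn : 1 ≤ n) :
    ((n : ℝ) / ∑ k ∈ Finset.range n, theta d p k) *
        (theta d p n * (1 - theta d p n)) ≤
      ∑ e ∈ boxEdges d n, cylInfluence d p (boxEdges d n) (zeroToBoundary d n) e := by
  have hp' := Set.Ioo_subset_Icc_self hp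
  set S := ∑ k ∈ Finset.range n, theta d p k
  set I := ∑ e ∈ boxEdges d n, cylInfluence d p (boxEdges d n) (zeroToBoundary d n) e
  have hS : 1 ≤ S := one_le_sum_range_theta hp' hn
  have hI : 0 ≤ I := Finset.sum_nonneg fun e he =>
    (cylInfluence_eq_flipInfluence _ _ ⟨e, he⟩).symm ▸
      cubeExp_nonneg hp' fun _ => boolDist_nonneg _ _
  have hpq : p * (1 - p) ≤ 1 / 4 := by nlinarith [sq_nonneg (2 * p - 1)]
  rw [div_mul_eq_mul_div, div_le_iff₀ (by linarith)]
  calc n * (theta d p n * (1 - theta d p n)) ≤ 4 * (p * (1 - p)) * S * I :=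
        nat_mul_theta_mul_one_sub_le hp'
    _ ≤ I * S := by nlinarith [mul_nonneg (by linarith : (0 : ℝ) ≤ S) hI]

/-- **Influence lower bound via the OSSS inequality.**  For Bernoulli bond percolation
on `ℤ^d` at `p ∈ (0,1)` and every `n ≥ 1`,
`Σ_{e ∈ E_n} Inf_e[𝟙_{0 ↔ ∂Λ_n}] ≥ (n / S_n)·θ_n(1 − θ_n)`,
where `E_n` is the set of edges with both endpoints in `Λ_n`, `θ_k = ℙ_p[0 ↔ ∂Λ_k]`
(`θ_0 = 1`) and `S_n = Σ_{k=0}^{n−1} θ_k`. -/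
theorem influence_sum_lower_bound (d : ℕ) (hd : 1 ≤ d) (p : ℝ)
    (hp : p ∈ Set.Ioo (0 : ℝ) 1) (n : ℕ) (hn : 1 ≤ n) :
    ((n : ℝ) / ∑ k ∈ Finset.range n, theta d p k) *
        (theta d p n * (1 - theta d p n)) ≤
      ∑ e ∈ boxEdges d n, cylInfluence d p (boxEdges d n) (zeroToBoundary d n) e :=
  influence_sum_lower_bound_general d p hp n hn
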